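/- arXiv:1002.2237 — 2 statements merged into one kernel-verified Lean document; each statement's English description precedes it below -/
import Mathlib

section
/- In the piecewise-linear setting of the previous statement (f^S composed of affine maps x ↦ μb + A_{S_i}x, μ ≠ 0, ϱᵀb ≠ 0): if det(P_S) ≠ 0 and I−M_S is singular, then f^S has no fixed point. -/
/-!
The matrices `A_L`, `A_R` agree off column `0`, so telescoping gives
`I - M_S = P_S (I - A_L)` off column `0`. Row `0` of an adjugate does not see column `0`, hence
`ϱ_Sᵀ = e₁ᵀ adj (P_S (I - A_L)) = ϱᵀ adj P_S` and `ϱ_Sᵀ P_S = det P_S · ϱᵀ`. Applying `ϱ_Sᵀ` to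
a fixed point equation `(I - M_S) x = μ P_S b` gives `det (I - M_S) · x₀ = μ det P_S · ϱᵀ b`, where
the left side vanishes and the right side does not.
-/

open Matrix

/-- `M_S = A_{S_{n−1}} ⋯ A_{S_1} A_{S_0}`. -/
def wordProd {N n : ℕ} (A : Bool → Matrix (Fin N) (Fin N) ℝ)
    (S : Fin n → Bool) : Matrix (Fin N) (Fin N) ℝ :=
  ((List.ofFn fun i => A (S i)).reverse).prod

/-- `P_S = I + A_{S_{n−1}} + A_{S_{n−1}}A_{S_{n−2}} + ⋯ + A_{S_{n−1}}⋯A_{S_1}`. -/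
def wordP {N n : ℕ} (A : Bool → Matrix (Fin N) (Fin N) ℝ)
    (S : Fin n → Bool) : Matrix (Fin N) (Fin N) ℝ :=
  ∑ k ∈ Finset.range n, (((List.ofFn fun i => A (S i)).reverse).take k).prod

/-- `f^S = f^{S_{n−1}} ∘ ⋯ ∘ f^{S_0}` where `f^{S_i}(x) = μ b + A_{S_i} x`. -/
def affIter {N n : ℕ} (A : Bool → Matrix (Fin N) (Fin N) ℝ)
    (b : Fin N → ℝ) (μ : ℝ) (S : Fin n → Bool) (x : Fin N → ℝ) : Fin N → ℝ :=
  Fin.foldl n (fun y i => μ • b + (A (S i)).mulVec y) x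

section AdjugateRow

variable {n R : Type*} [Fintype n] [DecidableEq n] [CommRing R]

theorem Matrix.adjugate_apply_eq_det_updateCol (X : Matrix n n R) (i j : n) :
    X.adjugate i j = (X.updateCol i (Pi.single j 1)).det := by
  rw [← transpose_apply X.adjugate, adjugate_transpose, adjugate_def, of_apply, cramer_apply,
    transpose_transpose]

theorem Matrix.adjugate_updateCol_self (X : Matrix n n R) (i : n) (c : n → R) :
    (X.updateCol i c).adjugate i = X.adjugate i := by
  ext j
  rw [adjugate_apply_eq_det_updateCol, adjugate_apply_eq_det_updateCol, updateCol_idem]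

theorem Matrix.adjugate_apply_eq_of_updateCol_eq {X Y : Matrix n n R} {i : n}
    (h : X.updateCol i 0 = Y.updateCol i 0) : X.adjugate i = Y.adjugate i := by
  rw [← adjugate_updateCol_self X i 0, h, adjugate_updateCol_self]

theorem Matrix.adjugate_apply_dotProduct_mulVec (X : Matrix n n R) (i : n) (v : n → R) :
    X.adjugate i ⬝ᵥ (X *ᵥ v) = X.det * v i := by
  change (X.adjugate *ᵥ (X *ᵥ v)) i = _
  rw [mulVec_mulVec, adjugate_mul, smul_mulVec, one_mulVec]
  rfl

theorem Matrix.adjugate_mul_apply_dotProduct_mulVec (P Q : Matrix n n R) (i : n) (v : n → R) :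
    (P * Q).adjugate i ⬝ᵥ (P *ᵥ v) = P.det * (Q.adjugate i ⬝ᵥ v) := by
  change ((P * Q).adjugate *ᵥ (P *ᵥ v)) i = P.det * (Q.adjugate *ᵥ v) i
  rw [mulVec_mulVec, adjugate_mul_distrib, mul_assoc, adjugate_mul, Matrix.mul_smul, mul_one,
    smul_mulVec]
  rfl

theorem Matrix.updateCol_zero_eq_mul (X : Matrix n n R) (i : n) :
    X.updateCol i 0 = X * (1 : Matrix n n R).updateCol i 0 := by
  rw [mul_updateCol, mul_one, mulVec_zero]

end AdjugateRow

section Word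

variable {N : ℕ} (A : Bool → Matrix (Fin N) (Fin N) ℝ)

theorem ofFn_reverse_succ {m : ℕ} (S : Fin (m + 1) → Bool) :
    (List.ofFn fun i => A (S i)).reverse =
      A (S (Fin.last m)) :: (List.ofFn fun i => A (Fin.init S i)).reverse := by
  rw [List.ofFn_succ', List.concat_eq_append, List.reverse_append]
  rfl

theorem wordProd_succ {m : ℕ} (S : Fin (m + 1) → Bool) :
    wordProd A S = A (S (Fin.last m)) * wordProd A (Fin.init S) := by
  rw [wordProd, ofFn_reverse_succ, List.prod_cons, wordProd]

theorem wordP_succ {m : ℕ} (S : Fin (m + 1) → Bool) :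
    wordP A S = 1 + A (S (Fin.last m)) * wordP A (Fin.init S) := by
  rw [wordP, ofFn_reverse_succ, Finset.sum_range_succ', wordP, Finset.mul_sum, add_comm]
  simp only [List.take_succ_cons, List.prod_cons, List.take_zero, List.prod_nil]

theorem affIter_succ (b : Fin N → ℝ) (μ : ℝ) {m : ℕ} (S : Fin (m + 1) → Bool)
    (x : Fin N → ℝ) :
    affIter A b μ S x = μ • b + A (S (Fin.last m)) *ᵥ affIter A b μ (Fin.init S) x := by
  rw [affIter, Fin.foldl_succ_last]
  rfl

theorem affIter_eq (b : Fin N → ℝ) (μ : ℝ) {n : ℕ} (S : Fin n → Bool) (x : Fin N → ℝ) :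
    affIter A b μ S x = μ • (wordP A S *ᵥ b) + wordProd A S *ᵥ x := by
  induction n with
  | zero => simp [affIter, wordP, wordProd]
  | succ m ih =>
    rw [affIter_succ, ih, wordP_succ, wordProd_succ, add_mulVec, one_mulVec, mulVec_add,
      mulVec_smul, smul_add, mulVec_mulVec, mulVec_mulVec, add_assoc]

theorem one_sub_wordProd_mul_eq {B E : Matrix (Fin N) (Fin N) ℝ}
    (hA : ∀ s, A s * E = B * E) {n : ℕ} (S : Fin n → Bool) :
    (1 - wordProd A S) * E = wordP A S * (1 - B) * E := by
  induction n with
  | zero => simp [wordP, wordProd]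
  | succ m ih =>
    set C := A (S (Fin.last m))
    rw [wordProd_succ, wordP_succ]
    calc (1 - C * wordProd A (Fin.init S)) * E
        = (1 - C) * E + C * ((1 - wordProd A (Fin.init S)) * E) := by noncomm_ring
      _ = (1 - B) * E + C * (wordP A (Fin.init S) * (1 - B) * E) := by
        rw [ih, sub_mul, hA, ← sub_mul]
      _ = (1 + C * wordP A (Fin.init S)) * (1 - B) * E := by noncomm_ring

theorem one_sub_wordProd_updateCol_zero {k : Fin N} {B : Matrix (Fin N) (Fin N) ℝ}
    (hA : ∀ s, (A s).updateCol k 0 = B.updateCol k 0) {n : ℕ} (S : Fin n → Bool) :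
    (1 - wordProd A S).updateCol k 0 = (wordP A S * (1 - B)).updateCol k 0 := by
  rw [updateCol_zero_eq_mul (1 - wordProd A S), updateCol_zero_eq_mul (wordP A S * (1 - B))]
  refine one_sub_wordProd_mul_eq A (fun s => ?_) S
  rw [← updateCol_zero_eq_mul, ← updateCol_zero_eq_mul, hA]

end Word

theorem no_fixed_point_of_singular_general {N n : ℕ} [NeZero N]
    (AL AR : Matrix (Fin N) (Fin N) ℝ)
    (hcol : ∀ j : Fin N, j ≠ 0 → ∀ i : Fin N, AL i j = AR i j)
    (b : Fin N → ℝ) (μ : ℝ) (hμ : μ ≠ 0)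
    (hrhob : ((Matrix.adjugate (1 - AL)) 0) ⬝ᵥ b ≠ 0)
    (S : Fin n → Bool) (A : Bool → Matrix (Fin N) (Fin N) ℝ)
    (hA : A = fun s => if s then AL else AR)
    (hP : (wordP A S).det ≠ 0)
    (hM : (1 - wordProd A S).det = 0) :
    ∀ x : Fin N → ℝ, affIter A b μ S x ≠ x := by
  intro x hx
  have hfix : (1 - wordProd A S) *ᵥ x = μ • (wordP A S *ᵥ b) := by
    rw [sub_mulVec, one_mulVec, sub_eq_iff_eq_add, ← affIter_eq, hx]
  have hletters : ∀ s, (A s).updateCol 0 0 = AL.updateCol 0 0 := by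
    rintro (_ | _)
    · ext i j
      by_cases hj : j = 0 <;> simp [hA, hj, hcol j]
    · simp [hA]
  have key := adjugate_apply_dotProduct_mulVec (1 - wordProd A S) 0 x
  rw [hM, zero_mul, hfix, dotProduct_smul,
    adjugate_apply_eq_of_updateCol_eq (one_sub_wordProd_updateCol_zero A hletters S),
    adjugate_mul_apply_dotProduct_mulVec, smul_eq_mul] at key
  simp [hμ, hP, hrhob] at key

/-- In the piecewise-linear setting (`μ ≠ 0`, `ϱᵀb ≠ 0`), if
`det P_S ≠ 0` and `I − M_S` is singular, then `f^S` has no fixed point. -/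
theorem no_fixed_point_of_singular {N n : ℕ} [NeZero N] [NeZero n]
    (AL AR : Matrix (Fin N) (Fin N) ℝ)
    (hcol : ∀ j : Fin N, j ≠ 0 → ∀ i : Fin N, AL i j = AR i j)
    (b : Fin N → ℝ) (μ : ℝ) (hμ : μ ≠ 0)
    (hrhob : ((Matrix.adjugate (1 - AL)) 0) ⬝ᵥ b ≠ 0)
    (S : Fin n → Bool) (A : Bool → Matrix (Fin N) (Fin N) ℝ)
    (hA : A = fun s => if s then AL else AR)
    (hP : (wordP A S).det ≠ 0)
    (hM : (1 - wordProd A S).det = 0) :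
    ∀ x : Fin N → ℝ, affIter A b μ S x ≠ x :=
  no_fixed_point_of_singular_general AL AR hcol b μ hμ hrhob S A hA hP hM
end

section
/- Let S ∈ {L,R}ⁿ and suppose {y_i}_{i∈ℤ/n} is an S-cycle of the piecewise-linear map (y_{i+1} = μb + A_{S_i} y_i) with two points y_j ≠ y_k on the switching manifold (e₁ᵀy_j = e₁ᵀy_k = 0) such that flipping the symbols at both j and k turns S into a cyclic permutation S^{(r)} of itself, r ≢ 0 mod n. Then I − M_S is singular, where M_S = A_{S_{n−1}}⋯A_{S_0}, provided the cycle {y_i} has minimal period n. -/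
open Matrix

/-!
Since `y_j` and `y_k` lie on the switching manifold, where `A_L` and `A_R` act identically,
flipping the symbols at `j` and `k` does not change the orbit. Hence the rotated sequence
`z_i = y_{i-r}` is again an `S`-cycle. The difference `y_0 - z_0` is then fixed by `M_S`, and it is
nonzero, since otherwise `y = z` and `y` would have period `r`.
-/

/-- The paper's `S`-cycles, for the family of affine maps `x ↦ c + A s x`. -/
def IsAffineCycle {R ι σ : Type*} [CommRing R] [Fintype ι] {n : ℕ} [NeZero n]
    (c : ι → R) (A : σ → Matrix ι ι R) (S : Fin n → σ) (y : Fin n → ι → R) : Prop :=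
  ∀ i, y (i + 1) = c + A (S i) *ᵥ y i

namespace IsAffineCycle

variable {R ι σ : Type*} [CommRing R] [Fintype ι] {n : ℕ} [NeZero n]
  {c : ι → R} {A : σ → Matrix ι ι R} {S : Fin n → σ} {y z : Fin n → ι → R}

theorem sub (hy : IsAffineCycle c A S y) (hz : IsAffineCycle c A S z) :
    IsAffineCycle 0 A S (y - z) := fun i => by
  simp only [Pi.sub_apply, hy i, hz i, mulVec_sub, zero_add]
  abel

open Fin.NatCast in
theorem eq_of_apply_zero_eq (hy : IsAffineCycle c A S y) (hz : IsAffineCycle c A S z)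
    (h0 : y 0 = z 0) : y = z := by
  have hnat : ∀ m : ℕ, y m = z m := by
    intro m
    induction m with
    | zero => simpa using h0
    | succ m ih => rw [Nat.cast_succ, hy, hz, ih]
  exact funext fun i => by simpa using hnat i

theorem rotate (hy : IsAffineCycle c A S y) {r : Fin n}
    (hS : ∀ m, A (S (m + r)) *ᵥ y m = A (S m) *ᵥ y m) :
    IsAffineCycle c A S fun i => y (i - r) := fun i => by
  have hi := hy (i - r)
  rwa [← hS, sub_add_cancel, sub_add_eq_add_sub] at hi

end IsAffineCycle

theorem wordProd_succ_s16 {N n : ℕ} (A : Bool → Matrix (Fin N) (Fin N) ℝ) (S : Fin (n + 1) → Bool) :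
    wordProd A S = A (S (Fin.last n)) * wordProd A fun i => S i.castSucc := by
  rw [wordProd, wordProd, List.ofFn_succ']
  simp

theorem wordProd_mulVec_eq {N n : ℕ} (A : Bool → Matrix (Fin N) (Fin N) ℝ) (S : Fin n → Bool)
    (d : ℕ → Fin N → ℝ) (hd : ∀ i : Fin n, d (i + 1) = A (S i) *ᵥ d i) :
    wordProd A S *ᵥ d 0 = d n := by
  induction n with
  | zero => simp [wordProd]
  | succ n ih =>
    rw [wordProd_succ_s16, ← mulVec_mulVec, ih _ fun i => hd i.castSucc]
    exact (hd (Fin.last n)).symm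

open Fin.NatCast in
theorem IsAffineCycle.wordProd_mulVec_apply_zero {N n : ℕ} [NeZero n]
    {A : Bool → Matrix (Fin N) (Fin N) ℝ} {S : Fin n → Bool} {d : Fin n → Fin N → ℝ}
    (hd : IsAffineCycle 0 A S d) : wordProd A S *ᵥ d 0 = d 0 := by
  have h := wordProd_mulVec_eq A S (fun m => d m) fun i => by
    simpa only [Nat.cast_succ, Fin.cast_val_eq_self, zero_add] using hd i
  simpa using h

theorem mulVec_eq_of_eq_off_col {R ι : Type*} [NonUnitalNonAssocSemiring R] [Fintype ι]
    {A B : Matrix ι ι R} {c : ι} (hAB : ∀ j ≠ c, ∀ i, A i j = B i j) {v : ι → R}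
    (hv : v c = 0) : A *ᵥ v = B *ᵥ v := by
  ext i
  refine Finset.sum_congr rfl fun j _ => ?_
  by_cases hj : j = c
  · simp [hj, hv]
  · exact congrArg (· * v j) (hAB j hj i)

theorem det_one_sub_eq_zero_of_mulVec_eq_self {R ι : Type*} [CommRing R] [IsDomain R]
    [Fintype ι] [DecidableEq ι] {M : Matrix ι ι R} {v : ι → R} (hv : v ≠ 0) (hMv : M *ᵥ v = v) :
    (1 - M).det = 0 :=
  exists_mulVec_eq_zero_iff.mp ⟨v, hv, by rw [sub_mulVec, one_mulVec, hMv, sub_self]⟩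

theorem one_sub_wordProd_singular_general {N n : ℕ} [NeZero N] [NeZero n]
    (AL AR : Matrix (Fin N) (Fin N) ℝ)
    (hcol : ∀ j : Fin N, j ≠ 0 → ∀ i : Fin N, AL i j = AR i j)
    (A : Bool → Matrix (Fin N) (Fin N) ℝ)
    (hA : A = fun s => if s then AL else AR)
    (b : Fin N → ℝ) (μ : ℝ)
    (S : Fin n → Bool) (y : Fin n → Fin N → ℝ)
    (hcycle : ∀ i : Fin n, y (i + 1) = μ • b + (A (S i)).mulVec (y i))
    (j k : Fin n)
    (hj0 : y j 0 = 0) (hk0 : y k 0 = 0)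
    (r : Fin n) (hr : r ≠ 0)
    (hflip : ∀ i : Fin n,
      Function.update (Function.update S j (!S j)) k (!S k) i = S (i + r))
    (hmin : ∀ q : Fin n, q ≠ 0 → ∃ i : Fin n, y (i + q) ≠ y i) :
    (1 - wordProd A S).det = 0 := by
  have hswitch : ∀ v : Fin N → ℝ, v 0 = 0 → ∀ s t, A s *ᵥ v = A t *ᵥ v := by
    intro v hv s t
    have := mulVec_eq_of_eq_off_col hcol hv
    cases s <;> cases t <;> simp [hA, this]
  have hrot : ∀ m, A (S (m + r)) *ᵥ y m = A (S m) *ᵥ y m := by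
    intro m
    rw [← hflip m]
    by_cases hm : m = j ∨ m = k
    · obtain rfl | rfl := hm
      exacts [hswitch _ hj0 _ _, hswitch _ hk0 _ _]
    · rw [not_or] at hm
      rw [Function.update_of_ne hm.2, Function.update_of_ne hm.1]
  have hy : IsAffineCycle (μ • b) A S y := hcycle
  have hz := hy.rotate hrot
  refine det_one_sub_eq_zero_of_mulVec_eq_self (v := (y - _) 0) (fun h0 => ?_)
    (hy.sub hz).wordProd_mulVec_apply_zero
  obtain ⟨i, hi⟩ := hmin (-r) (neg_ne_zero.mpr hr)
  have hyz := congrFun (hy.eq_of_apply_zero_eq hz (sub_eq_zero.mp h0)) i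
  exact hi (by rw [← sub_eq_add_neg]; exact hyz.symm)

/-- Suppose `{y_i}` is an `S`-cycle of the piecewise-linear map
(`y_{i+1} = μ b + A_{S_i} y_i`, symbols `true = L`, `false = R`, with `A_L`,
`A_R` agreeing in their last `N−1` columns) having two distinct points
`y_j ≠ y_k` on the switching manifold, such that flipping the symbols at `j`
and `k` turns `S` into a nontrivial cyclic permutation `S^{(r)}` of itself
(`r ≠ 0`).  If the cycle has minimal period `n`, then `I − M_S` is singular. -/
theorem one_sub_wordProd_singular {N n : ℕ} [NeZero N] [NeZero n]
    (AL AR : Matrix (Fin N) (Fin N) ℝ)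
    (hcol : ∀ j : Fin N, j ≠ 0 → ∀ i : Fin N, AL i j = AR i j)
    (A : Bool → Matrix (Fin N) (Fin N) ℝ)
    (hA : A = fun s => if s then AL else AR)
    (b : Fin N → ℝ) (μ : ℝ)
    (S : Fin n → Bool) (y : Fin n → Fin N → ℝ)
    (hcycle : ∀ i : Fin n, y (i + 1) = μ • b + (A (S i)).mulVec (y i))
    (j k : Fin n) (hjk : y j ≠ y k)
    (hj0 : y j 0 = 0) (hk0 : y k 0 = 0)
    (r : Fin n) (hr : r ≠ 0)
    (hflip : ∀ i : Fin n,
      Function.update (Function.update S j (!S j)) k (!S k) i = S (i + r))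
    (hmin : ∀ q : Fin n, q ≠ 0 → ∃ i : Fin n, y (i + q) ≠ y i) :
    (1 - wordProd A S).det = 0 :=
  one_sub_wordProd_singular_general AL AR hcol A hA b μ S y hcycle j k hj0 hk0 r hr hflip hmin
end
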